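/- arXiv:1811.10538 — 2 statements merged into one kernel-verified Lean document; each statement's English description precedes it below -/
import Mathlib

section
/- Let A and Ã be real symmetric positive definite n×n matrices, let β := A^{-1/2}(Ã − A)A^{-1/2} and Q := (β + 2I)⁻¹β. Then all eigenvalues of β are strictly greater than −1, β + 2I is invertible, Q is symmetric, and the operator norm of Q satisfies ‖Q‖ < 1. -/
open Matrix

open scoped ComplexOrder in
noncomputable def Matrix.PosSemidef.sqrt {m 𝕜 : Type*} [Fintype m] [DecidableEq m] [RCLike 𝕜]
    {A : Matrix m m 𝕜} (hA : A.PosSemidef) : Matrix m m 𝕜 :=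
  (hA.1.eigenvectorUnitary : Matrix m m 𝕜) * diagonal ((↑) ∘ (√·) ∘ hA.1.eigenvalues) *
    (star hA.1.eigenvectorUnitary : Matrix m m 𝕜)

/-!
With `S = A^{1/2}`, the matrix `β + 1 = S⁻¹ Ã S⁻¹` is positive definite, so the Hermitian matrix
`β` has spectrum in `(-1, ∞)`. By the continuous functional calculus `Q = g β` with
`g x = x / (x + 2)`, hence `Q` is Hermitian with spectrum `g '' spectrum β ⊆ (-1, 1)`; the operator
norm of a Hermitian matrix is the largest absolute value of its eigenvalues, since conjugating by
the unitary of the spectral theorem preserves the norm.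
-/

lemma abs_div_add_two_lt_one {x : ℝ} (hx : -1 < x) : |x / (x + 2)| < 1 := by
  rw [abs_div, abs_of_pos (by linarith : 0 < x + 2), div_lt_one (by linarith), abs_lt]
  constructor <;> linarith

namespace Matrix

open scoped ComplexOrder Matrix.Norms.L2Operator

variable {n 𝕜 : Type*} [Fintype n] [DecidableEq n] [RCLike 𝕜]

lemma PosSemidef.sqrt_eq_cfc {A : Matrix n n 𝕜} (hA : A.PosSemidef) :
    hA.sqrt = cfc Real.sqrt A := by
  rw [hA.1.cfc_eq]
  rfl

lemma PosSemidef.isHermitian_sqrt {A : Matrix n n 𝕜} (hA : A.PosSemidef) :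
    hA.sqrt.IsHermitian :=
  hA.sqrt_eq_cfc ▸ cfc_predicate _ _

lemma PosSemidef.sqrt_mul_self {A : Matrix n n 𝕜} (hA : A.PosSemidef) :
    hA.sqrt * hA.sqrt = A := by
  rw [hA.sqrt_eq_cfc, ← cfc_mul _ _ A]
  conv_rhs => rw [← cfc_id' ℝ A hA.1]
  refine cfc_congr fun x hx => Real.mul_self_sqrt ?_
  obtain ⟨i, rfl⟩ := hA.1.spectrum_real_eq_range_eigenvalues ▸ hx
  exact hA.eigenvalues_nonneg i

lemma PosDef.isUnit_det_sqrt {A : Matrix n n 𝕜} (hA : A.PosDef) :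
    IsUnit hA.posSemidef.sqrt.det :=
  (isUnit_iff_isUnit_det _).mp <| isUnit_of_mul_isUnit_left <|
    hA.posSemidef.sqrt_mul_self ▸ hA.isUnit

lemma PosDef.inv_sqrt_mul_self_mul_inv_sqrt {A : Matrix n n 𝕜} (hA : A.PosDef) :
    hA.posSemidef.sqrt⁻¹ * A * hA.posSemidef.sqrt⁻¹ = 1 := by
  set S := hA.posSemidef.sqrt
  calc S⁻¹ * A * S⁻¹ = S⁻¹ * (S * S) * S⁻¹ := by rw [hA.posSemidef.sqrt_mul_self]
    _ = 1 := by
      rw [← Matrix.mul_assoc, nonsing_inv_mul _ hA.isUnit_det_sqrt, Matrix.one_mul,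
        mul_nonsing_inv _ hA.isUnit_det_sqrt]

lemma PosDef.inv_sqrt_mul_mul_inv_sqrt {A B : Matrix n n 𝕜} (hA : A.PosDef) (hB : B.PosDef) :
    (hA.posSemidef.sqrt⁻¹ * B * hA.posSemidef.sqrt⁻¹).PosDef := by
  have := hB.conjTranspose_mul_mul_same (B := hA.posSemidef.sqrt⁻¹) <|
    mulVec_injective_iff_isUnit.mpr <| (isUnit_iff_isUnit_det _).mpr <|
      isUnit_nonsing_inv_det _ hA.isUnit_det_sqrt
  rwa [conjTranspose_nonsing_inv, hA.posSemidef.isHermitian_sqrt.eq] at this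

lemma PosDef.pos_of_mem_spectrum {A : Matrix n n 𝕜} (hA : A.PosDef) {μ : ℝ}
    (hμ : μ ∈ spectrum ℝ A) : 0 < μ := by
  obtain ⟨i, rfl⟩ := hA.1.spectrum_real_eq_range_eigenvalues ▸ hμ
  exact hA.eigenvalues_pos i

lemma IsHermitian.norm_toEuclideanCLM_eq {A : Matrix n n 𝕜} (hA : A.IsHermitian) :
    ‖toEuclideanCLM (𝕜 := 𝕜) A‖ = ‖hA.eigenvalues‖ := by
  rw [← cstar_norm_def]
  conv_lhs => rw [hA.spectral_theorem]
  rw [Unitary.conjStarAlgAut_apply, ← Unitary.coe_star, CStarRing.norm_mul_coe_unitary,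
    CStarRing.norm_coe_unitary_mul, l2_opNorm_diagonal]
  simp [Pi.norm_def]

lemma IsHermitian.norm_toEuclideanCLM_lt {A : Matrix n n 𝕜} (hA : A.IsHermitian) {r : ℝ}
    (hr : 0 < r) (h : ∀ μ ∈ spectrum ℝ A, |μ| < r) : ‖toEuclideanCLM (𝕜 := 𝕜) A‖ < r := by
  rw [hA.norm_toEuclideanCLM_eq, pi_norm_lt_iff hr]
  exact fun i => h _ (hA.eigenvalues_mem_spectrum_real i)

lemma IsHermitian.add_two_eq_cfc {B : Matrix n n 𝕜} (hB : B.IsHermitian) :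
    B + 2 = cfc (fun x : ℝ => x + 2) B :=
  (cfc_add_const 2 (fun x => x) B continuousOn_id hB).trans
    (by rw [cfc_id' ℝ B hB, map_ofNat]) |>.symm

lemma IsHermitian.isUnit_add_two {B : Matrix n n 𝕜} (hB : B.IsHermitian)
    (h : ∀ μ ∈ spectrum ℝ B, μ + 2 ≠ 0) : IsUnit (B + 2) :=
  hB.add_two_eq_cfc ▸ (isUnit_cfc_iff _ B (by fun_prop) hB).mpr h

lemma IsHermitian.inv_add_two_mul_self_eq_cfc {B : Matrix n n 𝕜} (hB : B.IsHermitian)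
    (h : ∀ μ ∈ spectrum ℝ B, μ + 2 ≠ 0) :
    (B + 2)⁻¹ * B = cfc (fun x : ℝ => x / (x + 2)) B := by
  have hmul : (B + 2) * cfc (fun x : ℝ => x / (x + 2)) B = B := by
    rw [hB.add_two_eq_cfc, ← cfc_mul _ _ B (by fun_prop) (B.finite_real_spectrum.continuousOn _)]
    conv_rhs => rw [← cfc_id' ℝ B hB]
    exact cfc_congr fun x hx => mul_div_cancel₀ x (h x hx)
  calc (B + 2)⁻¹ * B = (B + 2)⁻¹ * ((B + 2) * cfc (fun x : ℝ => x / (x + 2)) B) := by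
        rw [hmul]
    _ = _ := nonsing_inv_mul_cancel_left _ _ <|
        (B + 2).isUnit_iff_isUnit_det.mp (hB.isUnit_add_two h)

lemma IsHermitian.isHermitian_inv_add_two_mul_self {B : Matrix n n 𝕜} (hB : B.IsHermitian)
    (h : ∀ μ ∈ spectrum ℝ B, μ + 2 ≠ 0) : ((B + 2)⁻¹ * B).IsHermitian :=
  hB.inv_add_two_mul_self_eq_cfc h ▸ cfc_predicate _ _

lemma IsHermitian.norm_toEuclideanCLM_inv_add_two_mul_self_lt_one {B : Matrix n n 𝕜}
    (hB : B.IsHermitian) (h : ∀ μ ∈ spectrum ℝ B, -1 < μ) :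
    ‖toEuclideanCLM (𝕜 := 𝕜) ((B + 2)⁻¹ * B)‖ < 1 := by
  have h2 : ∀ μ ∈ spectrum ℝ B, μ + 2 ≠ 0 := fun μ hμ => by linarith [h μ hμ]
  refine (hB.isHermitian_inv_add_two_mul_self h2).norm_toEuclideanCLM_lt one_pos fun ν hν => ?_
  rw [hB.inv_add_two_mul_self_eq_cfc h2] at hν
  obtain ⟨μ, hμ, rfl⟩ := (cfc_map_spectrum (fun x : ℝ => x / (x + 2)) B hB
    (B.finite_real_spectrum.continuousOn _)).subset hν
  exact abs_div_add_two_lt_one (h μ hμ)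

end Matrix

theorem contrast_matrix_Q_properties_general
    {n : ℕ} (A At : Matrix (Fin n) (Fin n) ℝ)
    (hA : A.PosDef) (hAt : At.PosDef) :
    ∀ β Q : Matrix (Fin n) (Fin n) ℝ,
      β = (hA.posSemidef.sqrt)⁻¹ * (At - A) * (hA.posSemidef.sqrt)⁻¹ →
      Q = (β + 2)⁻¹ * β →
      (∀ μ ∈ spectrum ℝ β, -1 < μ) ∧
      IsUnit (β + 2) ∧
      Q.IsSymm ∧
      ‖Matrix.toEuclideanCLM (𝕜 := ℝ) Q‖ < 1 := by
  rintro β Q hβ rfl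
  set C := hA.posSemidef.sqrt⁻¹ * At * hA.posSemidef.sqrt⁻¹
  have hC : C.PosDef := hA.inv_sqrt_mul_mul_inv_sqrt hAt
  have hβ_add_one : 1 + β = C := by
    rw [hβ, Matrix.mul_sub, Matrix.sub_mul, hA.inv_sqrt_mul_self_mul_inv_sqrt]
    abel
  have hβH : β.IsHermitian := eq_sub_of_add_eq' hβ_add_one ▸ hC.1.sub isHermitian_one
  have hspec : ∀ μ ∈ spectrum ℝ β, -1 < μ := fun μ hμ => by
    have := hC.pos_of_mem_spectrum (hβ_add_one ▸ spectrum.add_mem_add_iff.mpr hμ : μ + 1 ∈ _)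
    linarith
  have h2 : ∀ μ ∈ spectrum ℝ β, μ + 2 ≠ 0 := fun μ hμ => by linarith [hspec μ hμ]
  exact ⟨hspec, hβH.isUnit_add_two h2,
    isHermitian_iff_isSymm.mp (hβH.isHermitian_inv_add_two_mul_self h2),
    hβH.norm_toEuclideanCLM_inv_add_two_mul_self_lt_one hspec⟩

/-- For real symmetric positive definite matrices `A, At` (`At` playing the role of `Ã`), with
`β := A^{-1/2}(At − A)A^{-1/2}` and `Q := (β + 2I)⁻¹β`: all eigenvalues of `β` are `> −1`,
`β + 2I` is invertible, `Q` is symmetric, and the (spectral) operator norm of `Q` is `< 1`. -/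
theorem contrast_matrix_Q_properties
    {n : ℕ} (A At : Matrix (Fin n) (Fin n) ℝ)
    (hA : A.PosDef) (hAt : At.PosDef) (hAs : A.IsSymm) (hAts : At.IsSymm) :
    ∀ β Q : Matrix (Fin n) (Fin n) ℝ,
      β = (hA.posSemidef.sqrt)⁻¹ * (At - A) * (hA.posSemidef.sqrt)⁻¹ →
      Q = (β + 2)⁻¹ * β →
      (∀ μ ∈ spectrum ℝ β, -1 < μ) ∧
      IsUnit (β + 2) ∧
      Q.IsSymm ∧
      ‖Matrix.toEuclideanCLM (𝕜 := ℝ) Q‖ < 1 :=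
  contrast_matrix_Q_properties_general A At hA hAt
end

section
/- Let H be a complex Hilbert space, R : H → H a bounded linear operator, q a real number with ‖qR‖ < 1, and c > 0 a real constant. Define T(K) := −c·Re⟨K, (I − qR)⁻¹ K⟩ for K ∈ H. Then for every nonzero K, sign(T(K)) = −sign(c), i.e. T(K) < 0; moreover, if the prefactor −c is replaced by −c·q·q_z with q, q_z nonzero reals, then for every nonzero K the sign of the resulting quantity −c·q·q_z·Re⟨K, (I − qR)⁻¹ K⟩ equals −sign(q·q_z). -/
open scoped InnerProductSpace

lemma aux_pos_re
    {H : Type*} [NormedAddCommGroup H] [InnerProductSpace ℂ H] [CompleteSpace H]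
    (A : H →L[ℂ] H) (h : ‖A‖ < 1) (K : H) (hK : K ≠ 0) :
    0 < (⟪K, (((Units.oneSub A h)⁻¹ : (H →L[ℂ] H)ˣ) : H →L[ℂ] H) K⟫_ℂ).re := by
  set u := Units.oneSub A h with hu
  set y := (↑u⁻¹ : H →L[ℂ] H) K with hy
  have hKy : (↑u : H →L[ℂ] H) y = K := by
    rw [show ((↑u : H →L[ℂ] H) y) = (↑u * ↑u⁻¹ : H →L[ℂ] H) K from rfl, u.mul_inv]
    rfl
  have hyne : y ≠ 0 := by
    intro h0
    apply hK
    rw [← hKy, h0, map_zero]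
  have huval : (↑u : H →L[ℂ] H) = 1 - A := rfl
  have hinner : ⟪K, y⟫_ℂ = ⟪y, y⟫_ℂ - ⟪A y, y⟫_ℂ := by
    rw [← hKy, huval]
    simp [inner_sub_left]
  have hAy : |(⟪A y, y⟫_ℂ).re| ≤ ‖A‖ * ‖y‖ ^ 2 := by
    calc |(⟪A y, y⟫_ℂ).re| ≤ ‖⟪A y, y⟫_ℂ‖ := Complex.abs_re_le_norm _
      _ ≤ ‖A y‖ * ‖y‖ := norm_inner_le_norm _ _
      _ ≤ (‖A‖ * ‖y‖) * ‖y‖ := by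
          gcongr; exact A.le_opNorm y
      _ = ‖A‖ * ‖y‖ ^ 2 := by ring
  have hyy : (⟪y, y⟫_ℂ).re = ‖y‖ ^ 2 := by
    rw [inner_self_eq_norm_sq_to_K]; norm_cast
  have hypos : 0 < ‖y‖ ^ 2 := pow_pos (norm_pos_iff.mpr hyne) 2
  have : 0 < (1 - ‖A‖) * ‖y‖ ^ 2 := by
    have : 0 < 1 - ‖A‖ := by linarith
    positivity
  have h2 : (⟪K, y⟫_ℂ).re = ‖y‖ ^ 2 - (⟪A y, y⟫_ℂ).re := by
    rw [hinner, Complex.sub_re, hyy]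
  rw [hy] at h2 ⊢
  rw [h2]
  have := abs_le.mp hAy
  nlinarith

/-- Abstract sign property of the topological derivative: if `‖qR‖ < 1` and `c > 0`, then
`T(K) := −c·Re⟨K, (I − qR)⁻¹K⟩ < 0` for all `K ≠ 0`; and with prefactor `−c·q·q_z`
(`q, q_z ≠ 0`) the sign of the resulting quantity is `−sign(q·q_z)`. -/
theorem topological_derivative_sign
    {H : Type*} [NormedAddCommGroup H] [InnerProductSpace ℂ H] [CompleteSpace H]
    (R : H →L[ℂ] H) (q : ℝ) (h : ‖q • R‖ < 1) (c : ℝ) (hc : 0 < c) :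
    (∀ K : H, K ≠ 0 →
      -c * (⟪K, (((Units.oneSub (q • R) h)⁻¹ : (H →L[ℂ] H)ˣ) : H →L[ℂ] H) K⟫_ℂ).re < 0) ∧
    (∀ qz : ℝ, q ≠ 0 → qz ≠ 0 → ∀ K : H, K ≠ 0 →
      Real.sign (-(c * q * qz) *
          (⟪K, (((Units.oneSub (q • R) h)⁻¹ : (H →L[ℂ] H)ˣ) : H →L[ℂ] H) K⟫_ℂ).re)
        = -Real.sign (q * qz)) := by
  constructor
  · intro K hK
    have := aux_pos_re (q • R) h K hK
    nlinarith
  · intro qz hq hqz K hK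
    have hpos := aux_pos_re (q • R) h K hK
    set r := (⟪K, (((Units.oneSub (q • R) h)⁻¹ : (H →L[ℂ] H)ˣ) : H →L[ℂ] H) K⟫_ℂ).re
    rcases lt_or_gt_of_ne (mul_ne_zero hq hqz) with hneg | hposq
    · rw [Real.sign_of_neg hneg]
      have : 0 < -(c * q * qz) * r := by nlinarith [mul_pos hc hpos]
      rw [Real.sign_of_pos this]; norm_num
    · rw [Real.sign_of_pos hposq]
      have : -(c * q * qz) * r < 0 := by nlinarith [mul_pos hc hpos]
      rw [Real.sign_of_neg this]
end
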